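/- If M is a matroid with adjoint M' via adjoint map φ, then for each flat F of M, the rank of φ(F) in M' equals r(M) − r_M(F). -/

import Mathlib

open Set

namespace Matroid

variable {α β : Type*}

/-- The rank of a set in a matroid, valued in `ℕ∞`. -/
noncomputable def eRk' (M : Matroid α) (X : Set α) : ℕ∞ :=
  ⨆ I ∈ {I | M.Indep I ∧ I ⊆ X}, I.encard

/-- A hyperplane is a flat of rank `r(M) - 1`. -/
def Hyperplane' (M : Matroid α) (H : Set α) : Prop :=
  M.IsFlat H ∧ M.eRk' H + 1 = M.eRk' M.E

/-- A point is a rank-one flat. -/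
def Point' (M : Matroid α) (P : Set α) : Prop :=
  M.IsFlat P ∧ M.eRk' P = 1

/-- A matroid is simple if every subset of the ground set with at most two elements
is independent (no loops and no parallel pairs). -/
def Simple' (M : Matroid α) : Prop :=
  ∀ X ⊆ M.E, X.encard ≤ 2 → M.Indep X

/-- Deletion of a set from a matroid. -/
def delete' (M : Matroid α) (D : Set α) : Matroid α := M ↾ (M.E \ D)

/-- Contraction of a set in a matroid, defined by duality. -/
def contract' (M : Matroid α) (C : Set α) : Matroid α := (M✶.delete' C)✶

/-- `φ` is an adjoint map from `M` to `M'` : `M'` is simple of the same rank as `M`,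
`φ` maps flats of `M` to flats of `M'` injectively, reversing inclusion, and restricts
to a bijection from the hyperplanes of `M` onto the points of `M'`. -/
def IsAdjointMap (M : Matroid α) (M' : Matroid β) (φ : Set α → Set β) : Prop :=
  M'.Simple' ∧ M'.eRk' M'.E = M.eRk' M.E ∧
  (∀ F, M.IsFlat F → M'.IsFlat (φ F)) ∧
  (∀ ⦃F₁ F₂⦄, M.IsFlat F₁ → M.IsFlat F₂ → φ F₁ = φ F₂ → F₁ = F₂) ∧
  (∀ ⦃F₁ F₂⦄, M.IsFlat F₁ → M.IsFlat F₂ → F₁ ⊆ F₂ → φ F₂ ⊆ φ F₁) ∧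
  (∀ H, M.Hyperplane' H → M'.Point' (φ H)) ∧
  (∀ P, M'.Point' P → ∃ H, M.Hyperplane' H ∧ φ H = P)

/-- `IsMinor N M` means `N` is obtained from `M` by a sequence of deletions and
contractions. -/
inductive IsMinor' : Matroid α → Matroid α → Prop
  | refl (M : Matroid α) : IsMinor' M M
  | delete {M N : Matroid α} (h : IsMinor' N M) (D : Set α) : IsMinor' (N.delete' D) M
  | contract {M N : Matroid α} (h : IsMinor' N M) (C : Set α) : IsMinor' (N.contract' C) M

/-- `M` has an adjoint. -/
def HasAdjoint (M : Matroid α) : Prop :=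
  ∃ (M' : Matroid (Set α)) (φ : Set α → Set (Set α)), IsAdjointMap M M' φ

section Aux

variable {M : Matroid α} {X Y I F F₁ F₂ : Set α}

lemma encard_le_eRk' (hI : M.Indep I) (hIX : I ⊆ X) : I.encard ≤ M.eRk' X :=
  le_iSup₂ (f := fun J (_ : J ∈ {I | M.Indep I ∧ I ⊆ X}) => J.encard) I ⟨hI, hIX⟩

lemma eRk'_mono (M : Matroid α) (h : X ⊆ Y) : M.eRk' X ≤ M.eRk' Y :=
  iSup₂_le fun I hI => encard_le_eRk' hI.1 (hI.2.trans h)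

lemma eRk'_le_encard (M : Matroid α) (X : Set α) : M.eRk' X ≤ X.encard :=
  iSup₂_le fun _ hI => encard_mono hI.2

lemma IsBasis.eRk'_eq (hI : M.IsBasis I X) : M.eRk' X = I.encard := by
  refine le_antisymm (iSup₂_le fun J hJ => ?_) (encard_le_eRk' hI.indep hI.subset)
  obtain ⟨K, hK, hJK⟩ := hJ.1.subset_isBasis_of_subset hJ.2 hI.subset_ground
  rw [← hK.encard_eq_encard hI]
  exact encard_mono hJK

lemma eRk'_closure_eq (M : Matroid α) (hX : X ⊆ M.E) : M.eRk' (M.closure X) = M.eRk' X := by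
  obtain ⟨I, hI⟩ := M.exists_isBasis X hX
  rw [hI.isBasis_closure_right.eRk'_eq, hI.eRk'_eq]

lemma flat_closure' (M : Matroid α) (X : Set α) : M.IsFlat (M.closure X) := by
  rw [closure_def, sInter_eq_iInter]
  have hne : Nonempty {F // F ∈ {F | M.IsFlat F ∧ X ∩ M.E ⊆ F}} :=
    ⟨⟨M.E, M.ground_isFlat, inter_subset_right⟩⟩
  exact IsFlat.iInter fun i => i.2.1

/-- Strictly nested flats have ranks differing by at least one. -/
lemma flat_step {N : Matroid β} {F₁ F₂ : Set β} (h₁ : N.IsFlat F₁) (h₂ : N.IsFlat F₂)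
    (hss : F₁ ⊆ F₂) (hne : F₁ ≠ F₂) : N.eRk' F₁ + 1 ≤ N.eRk' F₂ := by
  obtain ⟨I, hI⟩ := N.exists_isBasis F₁ h₁.subset_ground
  obtain ⟨x, hxF₂, hxF₁⟩ := not_subset.1 (fun h => hne (hss.antisymm h))
  have hxI : x ∉ I := fun h => hxF₁ (hI.subset h)
  have hind : N.Indep (insert x I) := by
    rw [hI.indep.insert_indep_iff_of_notMem hxI]
    refine ⟨h₂.subset_ground hxF₂, ?_⟩
    rw [hI.closure_eq_closure, h₁.closure]
    exact hxF₁
  calc N.eRk' F₁ + 1 = I.encard + 1 := by rw [hI.eRk'_eq]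
    _ = (insert x I).encard := (encard_insert_of_notMem hxI).symm
    _ ≤ N.eRk' F₂ := encard_le_eRk' hind (insert_subset hxF₂ (hI.subset.trans hss))

lemma eRk'_insert_le (M : Matroid α) (x : α) (X : Set α) :
    M.eRk' (insert x X) ≤ M.eRk' X + 1 := by
  refine iSup₂_le fun J hJ => ?_
  have h1 : (J \ {x}).encard ≤ M.eRk' X :=
    encard_le_eRk' (hJ.1.subset diff_subset)
      (fun y hy => (hJ.2 hy.1).resolve_left hy.2)
  by_cases hxJ : x ∈ J
  · rw [← encard_diff_singleton_add_one hxJ]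
    exact add_le_add_left h1 1
  · calc J.encard = (J \ {x}).encard := by rw [diff_singleton_eq_self hxJ]
      _ ≤ M.eRk' X := h1
      _ ≤ M.eRk' X + 1 := le_self_add

end Aux

section Main

variable {M : Matroid α} {M' : Matroid β} {φ : Set α → Set β}

lemma isAdjointMap_le_up [M.Finite] (hφ : IsAdjointMap M M' φ) :
    ∀ n : ℕ, ∀ F, M.IsFlat F → M.eRk' F + n ≤ M.eRk' M.E → (n : ℕ∞) ≤ M'.eRk' (φ F) := by
  obtain ⟨hs, hr, hfl, hinj, hrev, -, -⟩ := hφ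
  intro n
  induction n with
  | zero => simp
  | succ n ih =>
    intro F hF hle
    have hEfin : M.eRk' M.E ≠ ⊤ :=
      ((M.eRk'_le_encard M.E).trans_lt M.ground_finite.encard_lt_top).ne
    have hFE : ¬ (M.E ⊆ F) := by
      intro hEF
      have hFeq : F = M.E := hF.subset_ground.antisymm hEF
      rw [hFeq] at hle
      push_cast at hle
      rw [show M.eRk' M.E = M.eRk' M.E + 0 from (add_zero _).symm] at hle
      have h0 : (n : ℕ∞) + 1 ≤ 0 :=
        (ENat.add_le_add_iff_left hEfin).1 (le_trans (le_of_eq (by ring)) hle)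
      simp at h0
    obtain ⟨x, hxE, hxF⟩ := not_subset.1 hFE
    set G := M.closure (insert x F) with hGdef
    have hGflat : M.IsFlat G := M.flat_closure' _
    have hxG : x ∈ G := M.subset_closure _ (insert_subset hxE hF.subset_ground) (mem_insert x F)
    have hFG : F ⊆ G := (subset_insert x F).trans
      (M.subset_closure _ (insert_subset hxE hF.subset_ground))
    have hne : F ≠ G := fun h => hxF (h ▸ hxG)
    have hGrk : M.eRk' G ≤ M.eRk' F + 1 := by
      rw [hGdef, M.eRk'_closure_eq (insert_subset hxE hF.subset_ground)]
      exact M.eRk'_insert_le x F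
    have ihG : (n : ℕ∞) ≤ M'.eRk' (φ G) := by
      refine ih G hGflat ?_
      calc M.eRk' G + n ≤ (M.eRk' F + 1) + n := add_le_add_left hGrk n
        _ = M.eRk' F + (n + 1) := by ring
        _ ≤ M.eRk' M.E := by
            refine le_trans (le_of_eq ?_) hle
            push_cast
            ring
    have hstep : M'.eRk' (φ G) + 1 ≤ M'.eRk' (φ F) :=
      flat_step (hfl G hGflat) (hfl F hF) (hrev hF hGflat hFG)
        (fun h => hne ((hinj hGflat hF h).symm))
    calc ((n + 1 : ℕ) : ℕ∞) = (n : ℕ∞) + 1 := by push_cast; ring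
      _ ≤ M'.eRk' (φ G) + 1 := add_le_add_left ihG 1
      _ ≤ M'.eRk' (φ F) := hstep

lemma isAdjointMap_le_down (hφ : IsAdjointMap M M' φ) :
    ∀ n : ℕ, ∀ F, M.IsFlat F → (n : ℕ∞) ≤ M.eRk' F →
      M'.eRk' (φ F) + n ≤ M'.eRk' M'.E := by
  obtain ⟨hs, hr, hfl, hinj, hrev, -, -⟩ := hφ
  intro n
  induction n with
  | zero =>
    intro F hF _
    simpa using M'.eRk'_mono (hfl F hF).subset_ground
  | succ n ih =>
    intro F hF hle
    obtain ⟨I, hI⟩ := M.exists_isBasis F hF.subset_ground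
    have hIne : I.Nonempty := by
      rw [nonempty_iff_ne_empty]
      rintro rfl
      rw [hI.eRk'_eq, encard_empty] at hle
      simp at hle
    obtain ⟨x, hxI⟩ := hIne
    set G := M.closure (I \ {x}) with hGdef
    have hGflat : M.IsFlat G := M.flat_closure' _
    have hGF : G ⊆ F := by
      rw [hGdef, ← hF.closure]
      exact (M.closure_subset_closure (diff_subset.trans hI.subset))
    have hxG : x ∉ G := hI.indep.notMem_closure_diff_of_mem hxI
    have hxF : x ∈ F := hI.subset hxI
    have hne : G ≠ F := fun h => hxG (h ▸ hxF)
    have hGrk : M.eRk' G = (I \ {x}).encard :=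
      ((hI.indep.subset diff_subset).isBasis_closure).eRk'_eq
    have hnG : (n : ℕ∞) ≤ M.eRk' G := by
      have h1 : ((n : ℕ∞) + 1) ≤ (I \ {x}).encard + 1 := by
        rw [encard_diff_singleton_add_one hxI, ← hI.eRk'_eq]
        refine le_trans (le_of_eq ?_) hle
        push_cast; ring
      rw [hGrk]
      exact_mod_cast (WithTop.add_le_add_iff_right (by simp : (1 : ℕ∞) ≠ ⊤)).1 h1
    have ihG := ih G hGflat hnG
    have hstep : M'.eRk' (φ F) + 1 ≤ M'.eRk' (φ G) :=
      flat_step (hfl F hF) (hfl G hGflat) (hrev hGflat hF hGF)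
        (fun h => hne (hinj hGflat hF h.symm))
    calc M'.eRk' (φ F) + ((n + 1 : ℕ) : ℕ∞) = (M'.eRk' (φ F) + 1) + n := by push_cast; ring
      _ ≤ M'.eRk' (φ G) + n := add_le_add_left hstep n
      _ ≤ M'.eRk' M'.E := ihG

end Main

/-- If `M` is a matroid with adjoint `M'` via adjoint map `φ`, then for each flat `F` of `M`,
the rank of `φ F` in `M'` equals `r(M) - r_M(F)`. -/
theorem stmt0 (M : Matroid α) (M' : Matroid β) [M.Finite] (φ : Set α → Set β)
    (hφ : IsAdjointMap M M' φ) (F : Set α) (hF : M.IsFlat F) :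
    M'.eRk' (φ F) = M.eRk' M.E - M.eRk' F := by
  have hr : M'.eRk' M'.E = M.eRk' M.E := hφ.2.1
  have hk_le : M.eRk' F ≤ M.eRk' M.E := M.eRk'_mono hF.subset_ground
  have hr_ne : M.eRk' M.E ≠ ⊤ :=
    ((M.eRk'_le_encard M.E).trans_lt M.ground_finite.encard_lt_top).ne
  have hk_ne : M.eRk' F ≠ ⊤ := fun h => hr_ne (top_le_iff.1 (h ▸ hk_le))
  set n : ℕ := (M.eRk' M.E - M.eRk' F).toNat with hn_def
  have hn : (n : ℕ∞) = M.eRk' M.E - M.eRk' F :=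
    ENat.coe_toNat fun h => hr_ne (top_le_iff.1 (h ▸ tsub_le_self))
  have hkn : M.eRk' F + (n : ℕ∞) = M.eRk' M.E := by
    rw [hn, add_tsub_cancel_of_le hk_le]
  have hlow : (n : ℕ∞) ≤ M'.eRk' (φ F) :=
    isAdjointMap_le_up hφ n F hF hkn.le
  set m : ℕ := (M.eRk' F).toNat with hm_def
  have hm : (m : ℕ∞) = M.eRk' F := ENat.coe_toNat hk_ne
  have hup : M'.eRk' (φ F) + (m : ℕ∞) ≤ M'.eRk' M'.E :=
    isAdjointMap_le_down hφ m F hF hm.le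
  rw [hm, hr] at hup
  exact le_antisymm (ENat.le_sub_of_add_le_left hk_ne (by rwa [add_comm])) (hn ▸ hlow)
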